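/- Property of the δ-approximate current-state estimator: for any initial state (x₀,q₀) ∈ X_{C0} and finite run (x₀,q₀) →_C^{u₁} (x₁,q₁) ⋯ →_C^{uₙ} (xₙ,qₙ), one has (i) x₀ →^{u₁} x₁ ⋯ →^{uₙ} xₙ is a run of S, and (ii) qₙ equals the set of states xₙ' ∈ X such that there exist x₀' ∈ X₀ and a run x₀' →^{u₁'} x₁' ⋯ →^{uₙ'} xₙ' of S with max_{0 ≤ i ≤ n} d(H(xᵢ), H(xᵢ')) ≤ δ. -/
import Mathlib


open Metric Set

section OpacityDefs

variable {X U Y Xa Ua Xb Ub Xc Uc : Type*}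

/-- A run of length `n` of the system with transition relation `tr`
(each step uses some input). -/
def IsRun (tr : X → U → X → Prop) (n : ℕ) (x : ℕ → X) : Prop :=
  ∀ i < n, ∃ u, tr (x i) u (x (i + 1))

/-- Exact initial-state opacity. -/
def ExactInitOpaque {Y : Type*} (X0 XS : Set X) (tr : X → U → X → Prop)
    (H : X → Y) : Prop :=
  ∀ n : ℕ, ∀ x : ℕ → X, x 0 ∈ X0 ∩ XS → IsRun tr n x →
    ∃ x' : ℕ → X, x' 0 ∈ X0 \ XS ∧ IsRun tr n x' ∧ ∀ i ≤ n, H (x i) = H (x' i)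

/-- δ-approximate initial-state opacity. -/
def ApproxInitOpaque [MetricSpace Y] (X0 XS : Set X) (tr : X → U → X → Prop)
    (H : X → Y) (δ : ℝ) : Prop :=
  ∀ n : ℕ, ∀ x : ℕ → X, x 0 ∈ X0 ∩ XS → IsRun tr n x →
    ∃ x' : ℕ → X, x' 0 ∈ X0 \ XS ∧ IsRun tr n x' ∧
      ∀ i ≤ n, dist (H (x i)) (H (x' i)) ≤ δ

/-- δ-approximate current-state opacity. -/
def ApproxCurOpaque [MetricSpace Y] (X0 XS : Set X) (tr : X → U → X → Prop)
    (H : X → Y) (δ : ℝ) : Prop :=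
  ∀ n : ℕ, ∀ x : ℕ → X, x 0 ∈ X0 → IsRun tr n x → x n ∈ XS →
    ∃ x' : ℕ → X, x' 0 ∈ X0 ∧ IsRun tr n x' ∧ x' n ∉ XS ∧
      ∀ i ≤ n, dist (H (x i)) (H (x' i)) ≤ δ

/-- δ-approximate infinite-step opacity. -/
def ApproxInfOpaque [MetricSpace Y] (X0 XS : Set X) (tr : X → U → X → Prop)
    (H : X → Y) (δ : ℝ) : Prop :=
  ∀ n : ℕ, ∀ x : ℕ → X, ∀ k ≤ n, x 0 ∈ X0 → IsRun tr n x → x k ∈ XS →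
    ∃ x' : ℕ → X, x' 0 ∈ X0 ∧ IsRun tr n x' ∧ x' k ∉ XS ∧
      ∀ i ≤ n, dist (H (x i)) (H (x' i)) ≤ δ

/-- Standing assumption: no initial state has all its δ-close initial states secret. -/
def StandingAssumption [MetricSpace Y] (X0 XS : Set X) (H : X → Y) (δ : ℝ) : Prop :=
  ∀ x0 ∈ X0, ¬ ({x ∈ X0 | dist (H x0) (H x) ≤ δ} ⊆ XS)

/-- Predecessors of a set of states (under any input). -/
def PreSet (tr : X → U → X → Prop) (q : Set X) : Set X :=
  {z | ∃ u, ∃ w ∈ q, tr z u w}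

/-- Successors of a set of states (under any input). -/
def PostSet (tr : X → U → X → Prop) (q : Set X) : Set X :=
  {z | ∃ u, ∃ w ∈ q, tr w u z}

/-- Initial states of the δ-approximate initial-state estimator. -/
def InitEstInit [MetricSpace Y] (H : X → Y) (δ : ℝ) : Set (X × Set X) :=
  {p | p.2 = {x' | dist (H p.1) (H x') ≤ δ}}

/-- Transition relation of the δ-approximate initial-state estimator. -/
def InitEstTr [MetricSpace Y] (tr : X → U → X → Prop) (H : X → Y) (δ : ℝ)
    (p : X × Set X) (u : U) (p' : X × Set X) : Prop :=
  tr p'.1 u p.1 ∧ p'.2 = PreSet tr p.2 ∩ {x'' | dist (H p'.1) (H x'') ≤ δ}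

/-- Reachable states of the δ-approximate initial-state estimator. -/
def InitEstReach [MetricSpace Y] (tr : X → U → X → Prop) (H : X → Y) (δ : ℝ) :
    Set (X × Set X) :=
  {p | ∃ (n : ℕ) (pr : ℕ → X × Set X) (u : ℕ → U), pr 0 ∈ InitEstInit H δ ∧
    (∀ i < n, InitEstTr tr H δ (pr i) (u i) (pr (i + 1))) ∧ pr n = p}

/-- Initial states of the δ-approximate current-state estimator. -/
def CurEstInit [MetricSpace Y] (X0 : Set X) (H : X → Y) (δ : ℝ) : Set (X × Set X) :=
  {p | p.1 ∈ X0 ∧ p.2 = {x' ∈ X0 | dist (H p.1) (H x') ≤ δ}}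

/-- Transition relation of the δ-approximate current-state estimator. -/
def CurEstTr [MetricSpace Y] (tr : X → U → X → Prop) (H : X → Y) (δ : ℝ)
    (p : X × Set X) (u : U) (p' : X × Set X) : Prop :=
  tr p.1 u p'.1 ∧ p'.2 = PostSet tr p.2 ∩ {x'' | dist (H p'.1) (H x'') ≤ δ}

/-- Reachable states of the δ-approximate current-state estimator. -/
def CurEstReach [MetricSpace Y] (X0 : Set X) (tr : X → U → X → Prop) (H : X → Y)
    (δ : ℝ) : Set (X × Set X) :=
  {p | ∃ (n : ℕ) (pr : ℕ → X × Set X) (u : ℕ → U), pr 0 ∈ CurEstInit X0 H δ ∧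
    (∀ i < n, CurEstTr tr H δ (pr i) (u i) (pr (i + 1))) ∧ pr n = p}

/-- ε-approximate initial-state opacity preserving simulation relation from
system `a` to system `b`. -/
def InitSOPSim [MetricSpace Y] (Xa0 XaS : Set Xa) (tra : Xa → Ua → Xa → Prop)
    (Ha : Xa → Y) (Xb0 XbS : Set Xb) (trb : Xb → Ub → Xb → Prop) (Hb : Xb → Y)
    (ε : ℝ) (R : Set (Xa × Xb)) : Prop :=
  (∀ xa0 ∈ Xa0 ∩ XaS, ∃ xb0 ∈ Xb0 ∩ XbS, (xa0, xb0) ∈ R) ∧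
  (∀ xb0 ∈ Xb0 \ XbS, ∃ xa0 ∈ Xa0 \ XaS, (xa0, xb0) ∈ R) ∧
  (∀ p ∈ R, dist (Ha p.1) (Hb p.2) ≤ ε) ∧
  (∀ p ∈ R, ∀ (ua : Ua) (xa' : Xa), tra p.1 ua xa' →
    ∃ (ub : Ub) (xb' : Xb), trb p.2 ub xb' ∧ (xa', xb') ∈ R) ∧
  (∀ p ∈ R, ∀ (ub : Ub) (xb' : Xb), trb p.2 ub xb' →
    ∃ (ua : Ua) (xa' : Xa), tra p.1 ua xa' ∧ (xa', xb') ∈ R)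

/-- ε-approximate current-state opacity preserving simulation relation from
system `a` to system `b`. -/
def CurSOPSim [MetricSpace Y] (Xa0 XaS : Set Xa) (tra : Xa → Ua → Xa → Prop)
    (Ha : Xa → Y) (Xb0 XbS : Set Xb) (trb : Xb → Ub → Xb → Prop) (Hb : Xb → Y)
    (ε : ℝ) (R : Set (Xa × Xb)) : Prop :=
  (∀ xa0 ∈ Xa0, ∃ xb0 ∈ Xb0, (xa0, xb0) ∈ R) ∧
  (∀ p ∈ R, dist (Ha p.1) (Hb p.2) ≤ ε) ∧
  (∀ p ∈ R, ∀ (ua : Ua) (xa' : Xa), tra p.1 ua xa' →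
    ∃ (ub : Ub) (xb' : Xb), trb p.2 ub xb' ∧ (xa', xb') ∈ R) ∧
  (∀ p ∈ R, ∀ (ua : Ua) (xa' : Xa), tra p.1 ua xa' → xa' ∈ XaS →
    ∃ (ub : Ub) (xb' : Xb), trb p.2 ub xb' ∧ xb' ∈ XbS ∧ (xa', xb') ∈ R) ∧
  (∀ p ∈ R, ∀ (ub : Ub) (xb' : Xb), trb p.2 ub xb' →
    ∃ (ua : Ua) (xa' : Xa), tra p.1 ua xa' ∧ (xa', xb') ∈ R) ∧
  (∀ p ∈ R, ∀ (ub : Ub) (xb' : Xb), trb p.2 ub xb' → xb' ∉ XbS →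
    ∃ (ua : Ua) (xa' : Xa), tra p.1 ua xa' ∧ xa' ∉ XaS ∧ (xa', xb') ∈ R)

/-- ε-approximate infinite-step opacity preserving simulation relation:
simultaneously an ε-InitSOP and an ε-CurSOP simulation relation. -/
def InfSOPSim [MetricSpace Y] (Xa0 XaS : Set Xa) (tra : Xa → Ua → Xa → Prop)
    (Ha : Xa → Y) (Xb0 XbS : Set Xb) (trb : Xb → Ub → Xb → Prop) (Hb : Xb → Y)
    (ε : ℝ) (R : Set (Xa × Xb)) : Prop :=
  InitSOPSim Xa0 XaS tra Ha Xb0 XbS trb Hb ε R ∧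
  CurSOPSim Xa0 XaS tra Ha Xb0 XbS trb Hb ε R

end OpacityDefs


/-- properties (i) and (ii) of the δ-approximate current-state
estimator (Proposition 4.5). -/
theorem curEst_properties {X U Y : Type*} [MetricSpace Y]
    (X0 : Set X) (tr : X → U → X → Prop) (H : X → Y) {δ : ℝ} (hδ : 0 ≤ δ)
    (n : ℕ) (p : ℕ → X × Set X) (u : ℕ → U)
    (h0 : p 0 ∈ CurEstInit X0 H δ)
    (hrun : ∀ i < n, CurEstTr tr H δ (p i) (u i) (p (i + 1))) :
    (∀ i < n, tr (p i).1 (u i) (p (i + 1)).1) ∧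
    (p n).2 = {xn' | ∃ x' : ℕ → X, x' 0 ∈ X0 ∧ IsRun tr n x' ∧ x' n = xn' ∧
      ∀ i ≤ n, dist (H ((p i).1)) (H (x' i)) ≤ δ} := by
  refine ⟨fun i hi => (hrun i hi).1, ?_⟩
  induction n with
  | zero =>
    rcases h0 with ⟨h01, h02⟩
    rw [h02]
    ext z
    simp only [Set.mem_setOf_eq]
    constructor
    · rintro ⟨hz0, hzd⟩
      exact ⟨fun _ => z, hz0, fun i hi => absurd hi (Nat.not_lt_zero i), rfl,
        fun i hi => by simpa [Nat.le_zero.mp hi] using hzd⟩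
    · rintro ⟨x', hx0, _, hxn, hd⟩
      exact ⟨hxn ▸ hx0, hxn ▸ hd 0 le_rfl⟩
  | succ n ih =>
    have ihn := ih (fun i hi => hrun i (Nat.lt_succ_of_lt hi))
    have hstep := hrun n (Nat.lt_succ_self n)
    rw [hstep.2, ihn]
    ext z
    simp only [Set.mem_inter_iff, Set.mem_setOf_eq, PostSet]
    constructor
    · rintro ⟨⟨u1, w, ⟨x', hx0, hrun', hxn, hd⟩, hwz⟩, hdz⟩
      refine ⟨fun i => if i ≤ n then x' i else z, by simp [hx0], ?_, by simp, ?_⟩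
      · intro i hi
        rcases Nat.lt_succ_iff_lt_or_eq.mp hi with h | h
        · obtain ⟨v, hv⟩ := hrun' i h
          exact ⟨v, by simp [Nat.le_of_lt h, Nat.succ_le_of_lt h, hv]⟩
        · subst h
          refine ⟨u1, ?_⟩
          simp only [le_refl, if_pos, Nat.not_succ_le_self, if_neg, not_false_iff, hxn]
          simpa [hxn] using hwz
      · intro i hi
        by_cases h : i ≤ n
        · simpa [h] using hd i h
        · have : i = n + 1 := le_antisymm hi (Nat.succ_le_of_lt (Nat.lt_of_not_le h))
          subst this
          simpa [h] using hdz
    · rintro ⟨x', hx0, hrun', hxn, hd⟩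
      obtain ⟨v, hv⟩ := hrun' n (Nat.lt_succ_self n)
      refine ⟨⟨v, x' n, ⟨x', hx0, fun i hi => hrun' i (Nat.lt_succ_of_lt hi), rfl,
        fun i hi => hd i (Nat.le_succ_of_le hi)⟩, hxn ▸ hv⟩, hxn ▸ hd (n+1) le_rfl⟩
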